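/- Let {σ^λ} be a sequence of weakly payoff monotone mixed-strategy profiles of the winner-bid auction (ties to h) converging to a Nash equilibrium σ whose payoff-determinant bid is p = c_l + 1. Then there exists Λ such that for all λ ≥ Λ, the expected bid of the low-valuation agent under σ_l^λ is less than c_l + 1 (provided v_l ≥ v_h/3), c_l − 1 < E_{σ_h^λ}(b) < c_l + t(v), π_l(σ^λ) < c_l + t(v) and π_h(σ^λ) > c_h + (ES − t(v)), where t(v) = max{2c_h/3 − c_l, ES/3} + 1 and ES = c_h − c_l. -/

import Mathlib

/-!
Because `σ_l` puts no mass above `p = c_l + 1`, every bid `b ≥ p` wins for `h` at price `b`, so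
equilibrium forces `σ_h` to be the point mass at `p`. At the limit profile therefore
`E_{σ_h}(b) = p`, `π_l = p` and `π_h = v_h - p`, and the strict bounds, which hold there with room
to spare, persist along the sequence by continuity.

For the low agent, bidding `c_l + 1` is never better than bidding `c_l` against any opponent
(it only adds a win at `c_l`, worth `v_l - c_l - 1 < c_l`), so weak payoff monotonicity gives
`σ_l^λ(c_l + 1) ≤ σ_l^λ(c_l)`. In the limit `σ_l(c_l) ≥ σ_l(c_l + 1) > 0`, so `E_{σ_l}(b) < c_l + 1`.
-/

open Finset Filter Topology

/-- Payoff to the low-valuation agent in the winner-bid auction when she bids `b`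
and the high-valuation agent bids `r` (ties won by the high-valuation agent). -/
noncomputable def UlWB (vl : ℕ) (b r : ℕ) : ℝ := if r < b then (vl : ℝ) - b else (r : ℝ)

/-- Payoff to the high-valuation agent in the winner-bid auction when she bids `b`
and the low-valuation agent bids `r` (ties won by the high-valuation agent). -/
noncomputable def UhWB (vh : ℕ) (b r : ℕ) : ℝ := if r ≤ b then (vh : ℝ) - b else (r : ℝ)

/-- A mixed strategy on the bid set `{0, ..., pbar}`. -/
def IsMixed (pbar : ℕ) (σ : ℕ → ℝ) : Prop :=
  (∀ b, 0 ≤ σ b) ∧ (∀ b, pbar < b → σ b = 0) ∧ ∑ b ∈ Finset.range (pbar + 1), σ b = 1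

/-- Expected payoff for the low-valuation agent of bidding `b` against `σh`. -/
noncomputable def eUl (pbar vl : ℕ) (σh : ℕ → ℝ) (b : ℕ) : ℝ :=
  ∑ r ∈ Finset.range (pbar + 1), σh r * UlWB vl b r

/-- Expected payoff for the high-valuation agent of bidding `b` against `σl`. -/
noncomputable def eUh (pbar vh : ℕ) (σl : ℕ → ℝ) (b : ℕ) : ℝ :=
  ∑ r ∈ Finset.range (pbar + 1), σl r * UhWB vh b r

/-- Nash equilibrium of the winner-bid auction. -/
def IsNashWB (pbar vl vh : ℕ) (σl σh : ℕ → ℝ) : Prop :=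
  IsMixed pbar σl ∧ IsMixed pbar σh ∧
  (∀ b ≤ pbar, 0 < σl b → ∀ b' ≤ pbar, eUl pbar vl σh b' ≤ eUl pbar vl σh b) ∧
  (∀ b ≤ pbar, 0 < σh b → ∀ b' ≤ pbar, eUh pbar vh σl b' ≤ eUh pbar vh σl b)

/-- Expected payoff of the low-valuation agent at a mixed profile. -/
noncomputable def piL (pbar vl : ℕ) (σl σh : ℕ → ℝ) : ℝ :=
  ∑ b ∈ Finset.range (pbar + 1), σl b * eUl pbar vl σh b

/-- Expected payoff of the high-valuation agent at a mixed profile. -/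
noncomputable def piH (pbar vh : ℕ) (σl σh : ℕ → ℝ) : ℝ :=
  ∑ b ∈ Finset.range (pbar + 1), σh b * eUh pbar vh σl b

/-- Weak payoff monotonicity for the low-valuation agent. -/
def WPMl (pbar vl : ℕ) (σl σh : ℕ → ℝ) : Prop :=
  ∀ a ≤ pbar, ∀ b ≤ pbar, σl b < σl a → eUl pbar vl σh b < eUl pbar vl σh a

/-- Weak payoff monotonicity for the high-valuation agent. -/
def WPMh (pbar vh : ℕ) (σl σh : ℕ → ℝ) : Prop :=
  ∀ a ≤ pbar, ∀ b ≤ pbar, σh b < σh a → eUh pbar vh σl b < eUh pbar vh σl a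

/-- Expected bid under a mixed strategy. -/
noncomputable def Ebid (pbar : ℕ) (σ : ℕ → ℝ) : ℝ :=
  ∑ b ∈ Finset.range (pbar + 1), σ b * b

section Distribution

variable {pbar : ℕ} {σ : ℕ → ℝ}

lemma IsMixed.le_of_pos (hσ : IsMixed pbar σ) {b : ℕ} (hb : 0 < σ b) : b ≤ pbar :=
  not_lt.1 fun h => hb.ne' (hσ.2.1 b h)

lemma IsMixed.sum_mul_eq_of_forall_pos (hσ : IsMixed pbar σ) {f : ℕ → ℝ} {c : ℝ}
    (hf : ∀ b, 0 < σ b → f b = c) : ∑ b ∈ range (pbar + 1), σ b * f b = c :=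
  calc ∑ b ∈ range (pbar + 1), σ b * f b = ∑ b ∈ range (pbar + 1), σ b * c := by
        refine sum_congr rfl fun b _ => ?_
        rcases (hσ.1 b).eq_or_lt with h | h
        · rw [← h, zero_mul, zero_mul]
        · rw [hf b h]
    _ = c := by rw [← sum_mul, hσ.2.2, one_mul]

lemma IsMixed.Ebid_eq_of_forall_pos (hσ : IsMixed pbar σ) {p : ℕ} (h : ∀ b, 0 < σ b → b = p) :
    Ebid pbar σ = p :=
  hσ.sum_mul_eq_of_forall_pos fun b hb => by rw [h b hb]

lemma IsMixed.Ebid_lt (hσ : IsMixed pbar σ) {p b₀ : ℕ} (hsupp : ∀ b, 0 < σ b → b ≤ p)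
    (hb₀ : b₀ < p) (hpos : 0 < σ b₀) : Ebid pbar σ < p := by
  have hnn : ∀ b ∈ range (pbar + 1), 0 ≤ σ b * ((p : ℝ) - b) := fun b _ => by
    rcases (hσ.1 b).eq_or_lt with h | h
    · rw [← h, zero_mul]
    · exact mul_nonneg h.le (sub_nonneg.2 (by exact_mod_cast hsupp b h))
  have hsum : ∑ b ∈ range (pbar + 1), σ b * ((p : ℝ) - b) = p - Ebid pbar σ := by
    simp only [Ebid, mul_sub, sum_sub_distrib, ← sum_mul, hσ.2.2, one_mul]
  have hterm : 0 < σ b₀ * ((p : ℝ) - b₀) :=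
    mul_pos hpos (sub_pos.2 (by exact_mod_cast hb₀))
  have := single_le_sum hnn (mem_range.2 (Nat.lt_succ_of_le (hσ.le_of_pos hpos)))
  linarith

end Distribution

section Continuity

variable {α : Type*} {l : Filter α} {pbar vl vh : ℕ} {σl σh : ℕ → ℝ} {σsl σsh : α → ℕ → ℝ}

lemma tendsto_Ebid (h : ∀ b, Tendsto (fun n => σsl n b) l (𝓝 (σl b))) :
    Tendsto (fun n => Ebid pbar (σsl n)) l (𝓝 (Ebid pbar σl)) :=
  tendsto_finsetSum _ fun b _ => (h b).mul_const _

lemma tendsto_eUl (h : ∀ b, Tendsto (fun n => σsh n b) l (𝓝 (σh b))) (b : ℕ) :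
    Tendsto (fun n => eUl pbar vl (σsh n) b) l (𝓝 (eUl pbar vl σh b)) :=
  tendsto_finsetSum _ fun r _ => (h r).mul_const _

lemma tendsto_eUh (h : ∀ b, Tendsto (fun n => σsl n b) l (𝓝 (σl b))) (b : ℕ) :
    Tendsto (fun n => eUh pbar vh (σsl n) b) l (𝓝 (eUh pbar vh σl b)) :=
  tendsto_finsetSum _ fun r _ => (h r).mul_const _

lemma tendsto_piL (hl : ∀ b, Tendsto (fun n => σsl n b) l (𝓝 (σl b)))
    (hh : ∀ b, Tendsto (fun n => σsh n b) l (𝓝 (σh b))) :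
    Tendsto (fun n => piL pbar vl (σsl n) (σsh n)) l (𝓝 (piL pbar vl σl σh)) :=
  tendsto_finsetSum _ fun b _ => (hl b).mul (tendsto_eUl hh b)

lemma tendsto_piH (hl : ∀ b, Tendsto (fun n => σsl n b) l (𝓝 (σl b)))
    (hh : ∀ b, Tendsto (fun n => σsh n b) l (𝓝 (σh b))) :
    Tendsto (fun n => piH pbar vh (σsl n) (σsh n)) l (𝓝 (piH pbar vh σl σh)) :=
  tendsto_finsetSum _ fun b _ => (hh b).mul (tendsto_eUh hl b)

end Continuity

section Auction

variable {pbar vl vh : ℕ} {σl σh : ℕ → ℝ}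

lemma UlWB_of_le {b r : ℕ} (h : b ≤ r) : UlWB vl b r = r := by
  simp [UlWB, not_lt.2 h]

lemma UlWB_succ_le {b : ℕ} (hvl : vl ≤ 2 * b + 1) (r : ℕ) : UlWB vl (b + 1) r ≤ UlWB vl b r := by
  unfold UlWB
  rcases lt_trichotomy r b with h | rfl | h
  · rw [if_pos (by omega), if_pos h]
    push_cast
    linarith
  · rw [if_pos (by omega), if_neg (lt_irrefl r)]
    have : (vl : ℝ) ≤ 2 * r + 1 := by exact_mod_cast hvl
    push_cast
    linarith
  · rw [if_neg (by omega), if_neg (by omega)]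

lemma eUl_succ_le {b : ℕ} (hvl : vl ≤ 2 * b + 1) (hσh : ∀ r, 0 ≤ σh r) :
    eUl pbar vl σh (b + 1) ≤ eUl pbar vl σh b :=
  sum_le_sum fun r _ => mul_le_mul_of_nonneg_left (UlWB_succ_le hvl r) (hσh r)

lemma WPMl.apply_succ_le (hw : WPMl pbar vl σl σh) (hσh : ∀ r, 0 ≤ σh r) {b : ℕ}
    (hvl : vl ≤ 2 * b + 1) (hb : b + 1 ≤ pbar) : σl (b + 1) ≤ σl b :=
  not_lt.1 fun h => (hw (b + 1) hb b (by omega) h).not_ge (eUl_succ_le hvl hσh)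

lemma eUh_eq_of_support_le (hl : IsMixed pbar σl) {b : ℕ} (hsupp : ∀ r, 0 < σl r → r ≤ b) :
    eUh pbar vh σl b = vh - b :=
  hl.sum_mul_eq_of_forall_pos fun r hr => by simp [UhWB, hsupp r hr]

lemma IsNashWB.eq_of_pos_high (hN : IsNashWB pbar vl vh σl σh) {p : ℕ}
    (hsuppl : ∀ b, 0 < σl b → b ≤ p) (hsupph : ∀ b, 0 < σh b → p ≤ b) (hp : p ≤ pbar) :
    ∀ b, 0 < σh b → b = p := by
  intro b hb
  have hpb := hsupph b hb
  have hbest := hN.2.2.2 b (hN.2.1.le_of_pos hb) hb p hp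
  rw [eUh_eq_of_support_le hN.1 fun r hr => (hsuppl r hr).trans hpb,
    eUh_eq_of_support_le hN.1 hsuppl] at hbest
  have : (b : ℝ) ≤ p := by linarith
  exact le_antisymm (by exact_mod_cast this) hpb

lemma piL_eq_of_support (hl : IsMixed pbar σl) (hh : IsMixed pbar σh) {p : ℕ}
    (hsuppl : ∀ b, 0 < σl b → b ≤ p) (hpt : ∀ b, 0 < σh b → b = p) :
    piL pbar vl σl σh = p :=
  hl.sum_mul_eq_of_forall_pos fun b hb =>
    hh.sum_mul_eq_of_forall_pos fun r hr => by rw [hpt r hr, UlWB_of_le (hsuppl b hb)]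

lemma piH_eq_of_support (hl : IsMixed pbar σl) (hh : IsMixed pbar σh) {p : ℕ}
    (hsuppl : ∀ b, 0 < σl b → b ≤ p) (hpt : ∀ b, 0 < σh b → b = p) :
    piH pbar vh σl σh = vh - p :=
  hh.sum_mul_eq_of_forall_pos fun b hb => by
    rw [hpt b hb, eUh_eq_of_support_le hl hsuppl]

end Auction

theorem stmt13_general (pbar vl vh cl ch : ℕ) (hvl : vl = 2 * cl) (hvh : vh = 2 * ch)
    (hclch : cl < ch) (hpbar : ch ≤ pbar)
    (σl σh : ℕ → ℝ) (hNash : IsNashWB pbar vl vh σl σh)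
    (hsuppl : ∀ b, 0 < σl b → b ≤ cl + 1) (hsupph : ∀ b, 0 < σh b → cl + 1 ≤ b)
    (hpl : 0 < σl (cl + 1))
    (σsl σsh : ℕ → ℕ → ℝ)
    (hmix : ∀ n, IsMixed pbar (σsl n) ∧ IsMixed pbar (σsh n))
    (hwpm : ∀ n, WPMl pbar vl (σsl n) (σsh n) ∧ WPMh pbar vh (σsl n) (σsh n))
    (hconvl : ∀ b, Tendsto (fun n => σsl n b) atTop (nhds (σl b)))
    (hconvh : ∀ b, Tendsto (fun n => σsh n b) atTop (nhds (σh b))) :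
    ∃ N : ℕ, ∀ n ≥ N,
      (vh ≤ 3 * vl → Ebid pbar (σsl n) < (cl : ℝ) + 1) ∧
      ((cl : ℝ) - 1 < Ebid pbar (σsh n) ∧
        Ebid pbar (σsh n) <
          (cl : ℝ) + (max (2 * (ch : ℝ) / 3 - cl) (((ch : ℝ) - cl) / 3) + 1)) ∧
      piL pbar vl (σsl n) (σsh n) <
        (cl : ℝ) + (max (2 * (ch : ℝ) / 3 - cl) (((ch : ℝ) - cl) / 3) + 1) ∧
      (ch : ℝ) + (((ch : ℝ) - cl) -
          (max (2 * (ch : ℝ) / 3 - cl) (((ch : ℝ) - cl) / 3) + 1)) <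
        piH pbar vh (σsl n) (σsh n) := by
  have hp : cl + 1 ≤ pbar := by omega
  have hpt := hNash.eq_of_pos_high hsuppl hsupph hp
  have hlow : σl (cl + 1) ≤ σl cl := le_of_tendsto_of_tendsto' (hconvl _) (hconvl _)
    fun n => (hwpm n).1.apply_succ_le (hmix n).2.1 (by omega) hp
  have hEl := hNash.1.Ebid_lt hsuppl (Nat.lt_succ_self cl) (hpl.trans_le hlow)
  have hEh := hNash.2.1.Ebid_eq_of_forall_pos hpt
  have hπl := piL_eq_of_support (vl := vl) hNash.1 hNash.2.1 hsuppl hpt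
  have hπh := piH_eq_of_support (vh := vh) hNash.1 hNash.2.1 hsuppl hpt
  push_cast at hEl hEh hπl hπh
  have hvhR : (vh : ℝ) = 2 * ch := by exact_mod_cast hvh
  set t := max (2 * (ch : ℝ) / 3 - cl) (((ch : ℝ) - cl) / 3) + 1
  have ht : 1 < t := lt_add_of_pos_left 1 <|
    lt_max_of_lt_right (div_pos (sub_pos.2 (by exact_mod_cast hclch)) three_pos)
  refine eventually_atTop.1 ?_
  filter_upwards [(tendsto_Ebid hconvl).eventually (eventually_lt_nhds hEl),
    (tendsto_Ebid hconvh).eventually (eventually_gt_nhds (by linarith : (cl : ℝ) - 1 < _)),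
    (tendsto_Ebid hconvh).eventually (eventually_lt_nhds (by linarith : _ < (cl : ℝ) + t)),
    (tendsto_piL hconvl hconvh).eventually (eventually_lt_nhds (by linarith : _ < (cl : ℝ) + t)),
    (tendsto_piH hconvl hconvh).eventually
      (eventually_gt_nhds (by linarith : (ch : ℝ) + ((ch - cl) - t) < _))]
    with n h₁ h₂ h₃ h₄ h₅
  exact ⟨fun _ => h₁, ⟨h₂, h₃⟩, h₄, h₅⟩

/-- Convergence of weakly payoff monotone play to a Nash equilibrium of the winner-bid
auction with payoff-determinant bid `p = cl + 1`: eventually the expected bids and payoffs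
satisfy the stated bounds, where `t(v) = max{2ch/3 - cl, ES/3} + 1` and `ES = ch - cl`. -/
theorem stmt13 (pbar vl vh cl ch : ℕ) (hvl : vl = 2 * cl) (hvh : vh = 2 * ch)
    (hcl : 0 < cl) (hclch : cl < ch) (hpbar : ch ≤ pbar)
    (σl σh : ℕ → ℝ) (hNash : IsNashWB pbar vl vh σl σh)
    (hsuppl : ∀ b, 0 < σl b → b ≤ cl + 1) (hsupph : ∀ b, 0 < σh b → cl + 1 ≤ b)
    (hpl : 0 < σl (cl + 1)) (hph : 0 < σh (cl + 1))
    (σsl σsh : ℕ → ℕ → ℝ)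
    (hmix : ∀ n, IsMixed pbar (σsl n) ∧ IsMixed pbar (σsh n))
    (hwpm : ∀ n, WPMl pbar vl (σsl n) (σsh n) ∧ WPMh pbar vh (σsl n) (σsh n))
    (hconvl : ∀ b, Tendsto (fun n => σsl n b) atTop (nhds (σl b)))
    (hconvh : ∀ b, Tendsto (fun n => σsh n b) atTop (nhds (σh b))) :
    ∃ N : ℕ, ∀ n ≥ N,
      (vh ≤ 3 * vl → Ebid pbar (σsl n) < (cl : ℝ) + 1) ∧
      ((cl : ℝ) - 1 < Ebid pbar (σsh n) ∧
        Ebid pbar (σsh n) <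
          (cl : ℝ) + (max (2 * (ch : ℝ) / 3 - cl) (((ch : ℝ) - cl) / 3) + 1)) ∧
      piL pbar vl (σsl n) (σsh n) <
        (cl : ℝ) + (max (2 * (ch : ℝ) / 3 - cl) (((ch : ℝ) - cl) / 3) + 1) ∧
      (ch : ℝ) + (((ch : ℝ) - cl) -
          (max (2 * (ch : ℝ) / 3 - cl) (((ch : ℝ) - cl) / 3) + 1)) <
        piH pbar vh (σsl n) (σsh n) :=
  stmt13_general pbar vl vh cl ch hvl hvh hclch hpbar σl σh hNash hsuppl hsupph hpl σsl σsh hmix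
    hwpm hconvl hconvh
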